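/- arXiv:1905.12592 — 3 statements merged into one kernel-verified Lean document; each statement's English description precedes it below -/
import Mathlib

section
/- Let z ~ N(0, σ²I_d), let x₁,…,xₙ ∈ R^d, w ∈ R^d, t₁,…,tₙ ∈ {0,1}, and y₁,…,yₙ ∈ R. Define τ̂_n = (1/n)·[ Σ_{i: t_i=1} y_i (1 + exp(−w·x_i)exp(−z·x_i)) − Σ_{i: t_i=0} y_i (1 + exp(w·x_i)exp(z·x_i)) ] and τ̂ = (1/n)·[ Σ_{i: t_i=1} y_i (1 + exp(−w·x_i)) − Σ_{i: t_i=0} y_i (1 + exp(w·x_i)) ]. Then E[τ̂_n] = τ̂ + (1/n) Σ_{i=1}^n α_i (exp(σ²‖x_i‖²/2) − 1), where α_i = (−1)^{1−t_i} y_i exp((−1)^{t_i} w·x_i). -/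
/-!
Both estimators are sums of per-unit terms, and the privatised term of unit `i` is the
non-private one with its propensity factor `exp(∓ w·xᵢ)` multiplied by `exp(∓ z·xᵢ)`.
Since `z` has independent `N(0, σ²)` coordinates, `E exp(z·c) = ∏ⱼ E exp(zⱼ cⱼ) = exp(σ²‖c‖²/2)`
by the one-dimensional Gaussian moment generating function, and `‖-xᵢ‖ = ‖xᵢ‖`.
So by linearity unit `i` contributes its non-private term plus `αᵢ (exp(σ²‖xᵢ‖²/2) - 1)`.
-/

open MeasureTheory ProbabilityTheory Finset
open scoped NNReal

section GaussianPi

variable {ι : Type*} [Fintype ι]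

lemma integrable_exp_sum_mul_pi_gaussianReal (m : ι → ℝ) (v : ι → ℝ≥0) (c : ι → ℝ) :
    Integrable (fun z : ι → ℝ => Real.exp (∑ j, z j * c j))
      (Measure.pi fun j => gaussianReal (m j) (v j)) := by
  simp_rw [Real.exp_sum, mul_comm _ (c _)]
  exact Integrable.fintype_prod fun j => integrable_exp_mul_gaussianReal (c j)

lemma integral_exp_sum_mul_pi_gaussianReal (m : ι → ℝ) (v : ι → ℝ≥0) (c : ι → ℝ) :
    ∫ z : ι → ℝ, Real.exp (∑ j, z j * c j) ∂(Measure.pi fun j => gaussianReal (m j) (v j))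
      = Real.exp (∑ j, (m j * c j + v j * c j ^ 2 / 2)) := by
  simp_rw [Real.exp_sum]
  conv_lhs => enter [2, z, 2, j]; rw [mul_comm]
  rw [integral_fintype_prod_eq_prod (fun j x => Real.exp (c j * x))]
  exact prod_congr rfl fun j _ =>
    congrFun (mgf_fun_id_gaussianReal (μ := m j) (v := v j)) (c j)

lemma integral_exp_sum_mul_pi_gaussianReal_zero_mean (v : ℝ≥0) (c : ι → ℝ) :
    ∫ z : ι → ℝ, Real.exp (∑ j, z j * c j) ∂(Measure.pi fun _ => gaussianReal 0 v)
      = Real.exp (v * (∑ j, c j ^ 2) / 2) := by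
  rw [integral_exp_sum_mul_pi_gaussianReal (fun _ => 0) (fun _ => v), mul_sum, sum_div]
  simp_rw [zero_mul, zero_add]

lemma integrable_mul_one_add_mul_exp_pi_gaussianReal (v : ℝ≥0) (a b : ℝ) (c : ι → ℝ) :
    Integrable (fun z : ι → ℝ => a * (1 + b * Real.exp (∑ j, z j * c j)))
      (Measure.pi fun _ => gaussianReal 0 v) :=
  ((integrable_const 1).add
    ((integrable_exp_sum_mul_pi_gaussianReal (fun _ => 0) (fun _ => v) c).const_mul b)).const_mul a

lemma integral_mul_one_add_mul_exp_pi_gaussianReal (v : ℝ≥0) (a b : ℝ) (c : ι → ℝ) :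
    ∫ z : ι → ℝ, a * (1 + b * Real.exp (∑ j, z j * c j)) ∂(Measure.pi fun _ => gaussianReal 0 v)
      = a * (1 + b * Real.exp (v * (∑ j, c j ^ 2) / 2)) := by
  have hexp := integrable_exp_sum_mul_pi_gaussianReal (fun _ => 0) (fun _ => v) c
  rw [integral_const_mul, integral_add (integrable_const 1) (hexp.const_mul b), integral_const_mul,
    integral_exp_sum_mul_pi_gaussianReal_zero_mean]
  simp

end GaussianPi

lemma sum_filter_true_sub_sum_filter_false {ι M : Type*} [Fintype ι] [AddCommGroup M]
    (t : ι → Bool) (f g : ι → M) :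
    ∑ i ∈ univ.filter (fun i => t i = true), f i - ∑ i ∈ univ.filter (fun i => t i = false), g i
      = ∑ i, if t i then f i else -g i := by
  simp [sum_ite, sub_eq_add_neg, sum_neg_distrib]

theorem exp_privatised_ipw_ate_general (d n : ℕ) (σ : ℝ)
    (x : Fin n → Fin d → ℝ) (w : Fin d → ℝ) (t : Fin n → Bool) (y : Fin n → ℝ)
    (α : Fin n → ℝ)
    (hα : ∀ i, α i = if t i then y i * Real.exp (-∑ j, w j * x i j)
                     else -(y i * Real.exp (∑ j, w j * x i j))) :
    ∫ z : Fin d → ℝ,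
        (1 / (n : ℝ)) *
          ((∑ i ∈ univ.filter fun i => t i = true,
              y i * (1 + Real.exp (-∑ j, w j * x i j) * Real.exp (-∑ j, z j * x i j)))
           - ∑ i ∈ univ.filter fun i => t i = false,
              y i * (1 + Real.exp (∑ j, w j * x i j) * Real.exp (∑ j, z j * x i j)))
        ∂(Measure.pi fun _ : Fin d => gaussianReal 0 ⟨σ ^ 2, sq_nonneg σ⟩)
      = (1 / (n : ℝ)) *
          ((∑ i ∈ univ.filter fun i => t i = true,
              y i * (1 + Real.exp (-∑ j, w j * x i j)))
           - ∑ i ∈ univ.filter fun i => t i = false,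
              y i * (1 + Real.exp (∑ j, w j * x i j)))
        + (1 / (n : ℝ)) *
          ∑ i, α i * (Real.exp (σ ^ 2 * (∑ j, (x i j) ^ 2) / 2) - 1) := by
  have hneg (i : Fin n) (z : Fin d → ℝ) : -∑ j, z j * x i j = ∑ j, z j * -x i j := by
    simp only [mul_neg, sum_neg_distrib]
  have hE (a b : ℝ) (c : Fin d → ℝ) :
      ∫ z : Fin d → ℝ, a * (1 + b * Real.exp (∑ j, z j * c j))
          ∂(Measure.pi fun _ => gaussianReal 0 ⟨σ ^ 2, sq_nonneg σ⟩)
        = a * (1 + b * Real.exp (σ ^ 2 * (∑ j, c j ^ 2) / 2)) :=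
    integral_mul_one_add_mul_exp_pi_gaussianReal _ a b c
  have hI := integrable_mul_one_add_mul_exp_pi_gaussianReal (ι := Fin d) ⟨σ ^ 2, sq_nonneg σ⟩
  simp only [sum_filter_true_sub_sum_filter_false, hneg] at hα ⊢
  rw [integral_const_mul, integral_finsetSum _ fun i _ => ?_, ← mul_add, ← sum_add_distrib]
  · refine congrArg _ (sum_congr rfl fun i _ => ?_)
    rw [hα i]
    cases t i
    · simp only [Bool.false_eq_true, ite_false, integral_neg, hE]
      ring
    · simp only [ite_true, hE, neg_sq]
      ring
  · cases t i
    · simpa only [Bool.false_eq_true, ite_false, Pi.neg_def] using (hI _ _ _).neg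
    · simpa only [ite_true] using hI _ _ _

/-- Lemma 1 (bias of the partially privatised IPW ATE estimate): with
`z ~ N(0, σ² I_d)`, `E[τ̂_n] = τ̂ + (1/n) ∑ i, α i (exp(σ²‖x i‖²/2) − 1)`. -/
theorem exp_privatised_ipw_ate (d n : ℕ) (hn : 0 < n) (σ : ℝ)
    (x : Fin n → Fin d → ℝ) (w : Fin d → ℝ) (t : Fin n → Bool) (y : Fin n → ℝ)
    (α : Fin n → ℝ)
    (hα : ∀ i, α i = if t i then y i * Real.exp (-∑ j, w j * x i j)
                     else -(y i * Real.exp (∑ j, w j * x i j))) :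
    ∫ z : Fin d → ℝ,
        (1 / (n : ℝ)) *
          ((∑ i ∈ univ.filter fun i => t i = true,
              y i * (1 + Real.exp (-∑ j, w j * x i j) * Real.exp (-∑ j, z j * x i j)))
           - ∑ i ∈ univ.filter fun i => t i = false,
              y i * (1 + Real.exp (∑ j, w j * x i j) * Real.exp (∑ j, z j * x i j)))
        ∂(Measure.pi fun _ : Fin d => gaussianReal 0 ⟨σ ^ 2, sq_nonneg σ⟩)
      = (1 / (n : ℝ)) *
          ((∑ i ∈ univ.filter fun i => t i = true,
              y i * (1 + Real.exp (-∑ j, w j * x i j)))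
           - ∑ i ∈ univ.filter fun i => t i = false,
              y i * (1 + Real.exp (∑ j, w j * x i j)))
        + (1 / (n : ℝ)) *
          ∑ i, α i * (Real.exp (σ ^ 2 * (∑ j, (x i j) ^ 2) / 2) - 1) :=
  exp_privatised_ipw_ate_general d n σ x w t y α hα
end

section
/- Let x₁,…,xₙ ∈ R^d, w ∈ R^d, t_i ∈ {0,1}, y_i ≥ 0, and define φ(z) = (1/n)[Σ_{i: t_i=1} y_i(1 + exp(−w·x_i)exp(−z·x_i)) − Σ_{i: t_i=0} y_i(1 + exp(w·x_i)exp(z·x_i))]. Suppose ‖x_i‖ ≤ 1 for all i. If z, z′ ∈ R^d satisfy |z·x_i| ≤ ζ and |z′·x_i| ≤ ζ for all i, then |φ(z) − φ(z′)| ≤ (2/n) sinh(ζ)·(Σ_{i: t_i=1} y_i exp(−w·x_i) + Σ_{i: t_i=0} y_i exp(w·x_i)). -/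
open Finset

/-
Only the factor `exp (∓ z·xᵢ)` depends on the noise, and for `|a|, |b| ≤ ζ` the difference
`exp a - exp b` is at most `exp ζ - exp (-ζ) = 2 sinh ζ` in absolute value. Hence each summand
of `φ z - φ z'` is bounded by `2 sinh ζ` times its nonnegative weight `yᵢ exp (∓ w·xᵢ)`.
-/

theorem Real.abs_exp_sub_exp_le_two_mul_sinh {a b ζ : ℝ} (ha : |a| ≤ ζ) (hb : |b| ≤ ζ) :
    |Real.exp a - Real.exp b| ≤ 2 * Real.sinh ζ := by
  have hζ : ∀ {c : ℝ}, |c| ≤ ζ → Real.exp (-ζ) ≤ Real.exp c ∧ Real.exp c ≤ Real.exp ζ :=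
    fun hc => ⟨Real.exp_le_exp.2 (neg_le_of_abs_le hc), Real.exp_le_exp.2 (le_of_abs_le hc)⟩
  obtain ⟨ha₁, ha₂⟩ := hζ ha
  obtain ⟨hb₁, hb₂⟩ := hζ hb
  rw [Real.sinh_eq, abs_sub_le_iff]
  constructor <;> linarith

theorem abs_sum_mul_one_add_mul_sub_le {ι : Type*} {s : Finset ι} {y a u v : ι → ℝ} {B : ℝ}
    (hy : ∀ i ∈ s, 0 ≤ y i) (ha : ∀ i ∈ s, 0 ≤ a i) (huv : ∀ i ∈ s, |u i - v i| ≤ B) :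
    |∑ i ∈ s, y i * (1 + a i * u i) - ∑ i ∈ s, y i * (1 + a i * v i)|
      ≤ B * ∑ i ∈ s, y i * a i := by
  rw [← sum_sub_distrib, mul_sum]
  refine (abs_sum_le_sum_abs _ _).trans (sum_le_sum fun i hi => ?_)
  have hya : 0 ≤ y i * a i := mul_nonneg (hy i hi) (ha i hi)
  calc |y i * (1 + a i * u i) - y i * (1 + a i * v i)|
      = y i * a i * |u i - v i| := by
        rw [← abs_of_nonneg hya, ← abs_mul]; congr 1; ring
    _ ≤ B * (y i * a i) := by rw [mul_comm B]; exact mul_le_mul_of_nonneg_left (huv i hi) hya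

theorem abs_mul_sub_sub_mul_sub_le {c p q p' q' a b : ℝ} (hc : 0 ≤ c)
    (hp : |p - p'| ≤ a) (hq : |q - q'| ≤ b) :
    |c * (p - q) - c * (p' - q')| ≤ c * (a + b) := by
  rw [← mul_sub, abs_mul, abs_of_nonneg hc]
  refine mul_le_mul_of_nonneg_left ?_ hc
  calc |p - q - (p' - q')| = |(p - p') - (q - q')| := by congr 1; ring
    _ ≤ |p - p'| + |q - q'| := abs_sub _ _
    _ ≤ a + b := add_le_add hp hq

theorem ipw_bounded_difference_general (d n : ℕ)
    (x : Fin n → Fin d → ℝ) (w : Fin d → ℝ) (t : Fin n → Bool) (y : Fin n → ℝ)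
    (hy : ∀ i, 0 ≤ y i)
    (ζ : ℝ) (z z' : Fin d → ℝ)
    (hz : ∀ i, |∑ j, z j * x i j| ≤ ζ) (hz' : ∀ i, |∑ j, z' j * x i j| ≤ ζ) :
    |(1 / (n : ℝ)) *
        ((∑ i ∈ univ.filter fun i => t i = true,
            y i * (1 + Real.exp (-∑ j, w j * x i j) * Real.exp (-∑ j, z j * x i j)))
         - ∑ i ∈ univ.filter fun i => t i = false,
            y i * (1 + Real.exp (∑ j, w j * x i j) * Real.exp (∑ j, z j * x i j)))
      - (1 / (n : ℝ)) *
        ((∑ i ∈ univ.filter fun i => t i = true,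
            y i * (1 + Real.exp (-∑ j, w j * x i j) * Real.exp (-∑ j, z' j * x i j)))
         - ∑ i ∈ univ.filter fun i => t i = false,
            y i * (1 + Real.exp (∑ j, w j * x i j) * Real.exp (∑ j, z' j * x i j)))|
      ≤ (2 / (n : ℝ)) * Real.sinh ζ *
          ((∑ i ∈ univ.filter fun i => t i = true, y i * Real.exp (-∑ j, w j * x i j))
           + ∑ i ∈ univ.filter fun i => t i = false, y i * Real.exp (∑ j, w j * x i j)) := by
  have treated := abs_sum_mul_one_add_mul_sub_le (s := univ.filter fun i => t i = true)
    (a := fun i => Real.exp (-∑ j, w j * x i j))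
    (fun i _ => hy i) (fun i _ => (Real.exp_pos _).le) fun i _ =>
      Real.abs_exp_sub_exp_le_two_mul_sinh ((abs_neg _).le.trans (hz i))
        ((abs_neg _).le.trans (hz' i))
  have control := abs_sum_mul_one_add_mul_sub_le (s := univ.filter fun i => t i = false)
    (a := fun i => Real.exp (∑ j, w j * x i j))
    (fun i _ => hy i) (fun i _ => (Real.exp_pos _).le) fun i _ =>
      Real.abs_exp_sub_exp_le_two_mul_sinh (hz i) (hz' i)
  exact (abs_mul_sub_sub_mul_sub_le (by positivity) treated control).trans_eq (by ring)

/-- Deterministic core of Lemma 2 (bounded difference for the privatised IPW estimate). -/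
theorem ipw_bounded_difference (d n : ℕ) (hn : 0 < n)
    (x : Fin n → Fin d → ℝ) (w : Fin d → ℝ) (t : Fin n → Bool) (y : Fin n → ℝ)
    (hy : ∀ i, 0 ≤ y i) (hx : ∀ i, Real.sqrt (∑ j, (x i j) ^ 2) ≤ 1)
    (ζ : ℝ) (z z' : Fin d → ℝ)
    (hz : ∀ i, |∑ j, z j * x i j| ≤ ζ) (hz' : ∀ i, |∑ j, z' j * x i j| ≤ ζ) :
    |(1 / (n : ℝ)) *
        ((∑ i ∈ univ.filter fun i => t i = true,
            y i * (1 + Real.exp (-∑ j, w j * x i j) * Real.exp (-∑ j, z j * x i j)))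
         - ∑ i ∈ univ.filter fun i => t i = false,
            y i * (1 + Real.exp (∑ j, w j * x i j) * Real.exp (∑ j, z j * x i j)))
      - (1 / (n : ℝ)) *
        ((∑ i ∈ univ.filter fun i => t i = true,
            y i * (1 + Real.exp (-∑ j, w j * x i j) * Real.exp (-∑ j, z' j * x i j)))
         - ∑ i ∈ univ.filter fun i => t i = false,
            y i * (1 + Real.exp (∑ j, w j * x i j) * Real.exp (∑ j, z' j * x i j)))|
      ≤ (2 / (n : ℝ)) * Real.sinh ζ *
          ((∑ i ∈ univ.filter fun i => t i = true, y i * Real.exp (-∑ j, w j * x i j))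
           + ∑ i ∈ univ.filter fun i => t i = false, y i * Real.exp (∑ j, w j * x i j)) :=
  ipw_bounded_difference_general d n x w t y hy ζ z z' hz hz'
end

section
/- Suppose |y_i| ≤ C_y and exp(w·x_i) ≤ ξ for all i, with ξ ≥ 0. Then changing any single data point (x_i, t_i, y_i) to another point (x_i′, t_i′, y_i′) also satisfying these constraints changes the ATT estimator τ̂_{n,ATT} = (1/n)Σ_i (t_i − (1−t_i)exp(w·x_i))·y_i by at most (2 C_y / n)·max(1, ξ). -/
/-! Only the `i0`-th summands of the two averages differ, and each summand is bounded in
absolute value by `Cy * max 1 ξ`: a treated unit has weight `1`, an untreated one weight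
`-exp (w ⬝ x) ∈ [-ξ, 0]`. -/

open Finset

theorem sum_sub_sum_eq_sub_of_eq_off {ι M : Type*} [Fintype ι] [AddCommGroup M]
    {f g : ι → M} (i0 : ι) (h : ∀ i, i ≠ i0 → f i = g i) :
    ∑ i, f i - ∑ i, g i = f i0 - g i0 := by
  rw [← sum_sub_distrib, Fintype.sum_eq_single i0 fun i hi => sub_eq_zero.2 (h i hi)]

theorem abs_average_sub_average_le_of_eq_off {ι : Type*} [Fintype ι] (n : ℕ)
    {f g : ι → ℝ} {B : ℝ} (i0 : ι) (h : ∀ i, i ≠ i0 → f i = g i)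
    (hf : |f i0| ≤ B) (hg : |g i0| ≤ B) :
    |(1 / (n : ℝ)) * ∑ i, f i - (1 / (n : ℝ)) * ∑ i, g i| ≤ 2 * B / n := by
  rw [← mul_sub, sum_sub_sum_eq_sub_of_eq_off i0 h, abs_mul, abs_of_nonneg (by positivity)]
  calc 1 / (n : ℝ) * |f i0 - g i0| ≤ 1 / n * (B + B) :=
        mul_le_mul_of_nonneg_left ((abs_sub _ _).trans (add_le_add hf hg)) (by positivity)
    _ = 2 * B / n := by ring

def attWeight (t : Bool) (e : ℝ) : ℝ :=
  (if t then 1 else 0) - (if t then 0 else 1) * e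

theorem abs_attWeight_le (t : Bool) {e ξ : ℝ} (he : 0 ≤ e) (heξ : e ≤ ξ) :
    |attWeight t e| ≤ max 1 ξ := by
  cases t with
  | true => simp [attWeight]
  | false =>
    simp only [attWeight, Bool.false_eq_true, if_false, one_mul, zero_sub, abs_neg,
      abs_of_nonneg he]
    exact heξ.trans (le_max_right 1 ξ)

theorem abs_attWeight_mul_le (t : Bool) {e y Cy ξ : ℝ} (he : 0 ≤ e) (heξ : e ≤ ξ)
    (hy : |y| ≤ Cy) : |attWeight t e * y| ≤ Cy * max 1 ξ := by
  rw [abs_mul, mul_comm]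
  exact mul_le_mul hy (abs_attWeight_le t he heξ) (abs_nonneg _) ((abs_nonneg y).trans hy)

theorem att_sensitivity_general (d n : ℕ) (w : Fin d → ℝ) (Cy ξ : ℝ)
    (x x' : Fin n → Fin d → ℝ) (t t' : Fin n → Bool) (y y' : Fin n → ℝ)
    (hy : ∀ i, |y i| ≤ Cy) (hy' : ∀ i, |y' i| ≤ Cy)
    (hx : ∀ i, Real.exp (∑ j, w j * x i j) ≤ ξ)
    (hx' : ∀ i, Real.exp (∑ j, w j * x' i j) ≤ ξ)
    (i0 : Fin n) (hdiff : ∀ i, i ≠ i0 → x i = x' i ∧ t i = t' i ∧ y i = y' i) :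
    |(1 / (n : ℝ)) * ∑ i,
        ((if t i then (1:ℝ) else 0)
          - (if t i then (0:ℝ) else 1) * Real.exp (∑ j, w j * x i j)) * y i
      - (1 / (n : ℝ)) * ∑ i,
        ((if t' i then (1:ℝ) else 0)
          - (if t' i then (0:ℝ) else 1) * Real.exp (∑ j, w j * x' i j)) * y' i|
      ≤ (2 * Cy / (n : ℝ)) * max 1 ξ := by
  have hsame : ∀ i, i ≠ i0 → attWeight (t i) (Real.exp (∑ j, w j * x i j)) * y i
      = attWeight (t' i) (Real.exp (∑ j, w j * x' i j)) * y' i := by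
    intro i hi
    obtain ⟨hxi, hti, hyi⟩ := hdiff i hi
    rw [hxi, hti, hyi]
  calc _ ≤ 2 * (Cy * max 1 ξ) / n :=
        abs_average_sub_average_le_of_eq_off n i0 hsame
          (abs_attWeight_mul_le _ (Real.exp_nonneg _) (hx i0) (hy i0))
          (abs_attWeight_mul_le _ (Real.exp_nonneg _) (hx' i0) (hy' i0))
    _ = 2 * Cy / n * max 1 ξ := by ring

/-- L2-sensitivity of the ATT estimator: changing a single data point changes
`τ̂_{n,ATT}` by at most `(2 C_y / n) max(1, ξ)`. -/
theorem att_sensitivity (d n : ℕ) (hn : 0 < n) (w : Fin d → ℝ) (Cy ξ : ℝ)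
    (hξ : 0 ≤ ξ)
    (x x' : Fin n → Fin d → ℝ) (t t' : Fin n → Bool) (y y' : Fin n → ℝ)
    (hy : ∀ i, |y i| ≤ Cy) (hy' : ∀ i, |y' i| ≤ Cy)
    (hx : ∀ i, Real.exp (∑ j, w j * x i j) ≤ ξ)
    (hx' : ∀ i, Real.exp (∑ j, w j * x' i j) ≤ ξ)
    (i0 : Fin n) (hdiff : ∀ i, i ≠ i0 → x i = x' i ∧ t i = t' i ∧ y i = y' i) :
    |(1 / (n : ℝ)) * ∑ i,
        ((if t i then (1:ℝ) else 0)
          - (if t i then (0:ℝ) else 1) * Real.exp (∑ j, w j * x i j)) * y i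
      - (1 / (n : ℝ)) * ∑ i,
        ((if t' i then (1:ℝ) else 0)
          - (if t' i then (0:ℝ) else 1) * Real.exp (∑ j, w j * x' i j)) * y' i|
      ≤ (2 * Cy / (n : ℝ)) * max 1 ξ :=
  att_sensitivity_general d n w Cy ξ x x' t t' y y' hy hy' hx hx' i0 hdiff
end
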